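/- The map sending y_i ↦ b_i (i ≥ 1), extended to an injection of words, identifies (ℚ⟨Y⟩, ∗, Δ_dec) with the sub-bialgebra of (ℚ⟨B⟩, ∗_b, Δ_dec) spanned by all words not containing the letter b₀; in particular this span is closed under ∗_b and Δ_dec, and the map is an injective algebra morphism for the respective quasi-shuffle products. -/

import Mathlib

/-- The balanced quasi-shuffle product of two words over `B`. -/
noncomputable def bqs : List ℕ → List ℕ → (List ℕ →₀ ℚ)
  | [], w => Finsupp.single w 1
  | u@(_ :: _), [] => Finsupp.single u 1
  | i :: u, j :: v =>
      (bqs u (j :: v)).mapDomain (i :: ·) + (bqs (i :: u) v).mapDomain (j :: ·) +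
        (if 1 ≤ i ∧ 1 ≤ j then (bqs u v).mapDomain ((i + j) :: ·) else 0)
  termination_by u v => u.length + v.length

/-- The stuffle product of two words (the product of `ℚ⟨Y⟩`). -/
noncomputable def st : List ℕ → List ℕ → (List ℕ →₀ ℚ)
  | [], w => Finsupp.single w 1
  | u@(_ :: _), [] => Finsupp.single u 1
  | i :: u, j :: v =>
      (st u (j :: v)).mapDomain (i :: ·) + (st (i :: u) v).mapDomain (j :: ·) +
        (st u v).mapDomain ((i + j) :: ·)
  termination_by u v => u.length + v.length

/-! On `b₀`-free words the guard `1 ≤ i ∧ 1 ≤ j` in the recursion for `∗_b` always holds, so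
`∗_b` unfolds exactly like the stuffle product; and the stuffle product of `b₀`-free words only
prepends nonzero letters `i`, `j`, `i + j`, so it never creates a `b₀`. -/

lemma notMem_of_mem_support_mapDomain_cons {α R : Type*} [DecidableEq α] [AddCommMonoid R]
    {a i : α} (hi : i ≠ a) {f : List α →₀ R} (hf : ∀ w ∈ f.support, a ∉ w) :
    ∀ w ∈ (f.mapDomain (i :: ·)).support, a ∉ w := by
  intro w hw
  obtain ⟨x, hx, rfl⟩ := Finset.mem_image.1 (Finsupp.mapDomain_support hw)
  simp [hi.symm, hf x hx]

lemma notMem_of_mem_support_single {α R : Type*} [Zero R] {a : α} {u w : List α} {r : R}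
    (hu : a ∉ u) (hw : w ∈ (Finsupp.single u r).support) : a ∉ w := by
  rwa [Finset.mem_singleton.1 (Finsupp.support_single_subset hw)]

lemma bqs_eq_st : ∀ u v : List ℕ, 0 ∉ u → 0 ∉ v → bqs u v = st u v
  | [], _, _, _ => by rw [bqs, st]
  | _ :: _, [], _, _ => by rw [bqs, st]
  | i :: u, j :: v, hu, hv => by
    have hi : 1 ≤ i := Nat.one_le_iff_ne_zero.2 fun h => hu (h ▸ List.mem_cons_self)
    have hj : 1 ≤ j := Nat.one_le_iff_ne_zero.2 fun h => hv (h ▸ List.mem_cons_self)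
    have hu' : 0 ∉ u := fun h => hu (List.mem_cons_of_mem _ h)
    have hv' : 0 ∉ v := fun h => hv (List.mem_cons_of_mem _ h)
    rw [bqs, st, if_pos ⟨hi, hj⟩, bqs_eq_st u (j :: v) hu' hv, bqs_eq_st (i :: u) v hu hv',
      bqs_eq_st u v hu' hv']
  termination_by u v => u.length + v.length

lemma notMem_of_mem_support_st : ∀ u v : List ℕ, 0 ∉ u → 0 ∉ v →
    ∀ w ∈ (st u v).support, 0 ∉ w
  | [], _, _, hv => by
    rw [st]
    exact fun _ => notMem_of_mem_support_single hv
  | _ :: _, [], hu, _ => by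
    rw [st]
    exact fun _ => notMem_of_mem_support_single hu
  | i :: u, j :: v, hu, hv => by
    have hi : i ≠ 0 := fun h => hu (h ▸ List.mem_cons_self)
    have hj : j ≠ 0 := fun h => hv (h ▸ List.mem_cons_self)
    have hu' : 0 ∉ u := fun h => hu (List.mem_cons_of_mem _ h)
    have hv' : 0 ∉ v := fun h => hv (List.mem_cons_of_mem _ h)
    rw [st]
    intro w hw
    rcases Finset.mem_union.1 (Finsupp.support_add hw) with h | h
    · rcases Finset.mem_union.1 (Finsupp.support_add h) with h | h
      · exact notMem_of_mem_support_mapDomain_cons hi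
          (notMem_of_mem_support_st u (j :: v) hu' hv) w h
      · exact notMem_of_mem_support_mapDomain_cons hj
          (notMem_of_mem_support_st (i :: u) v hu hv') w h
    · exact notMem_of_mem_support_mapDomain_cons (by omega)
        (notMem_of_mem_support_st u v hu' hv') w h
  termination_by u v => u.length + v.length

/-- `(ℚ⟨Y⟩, ∗, Δ_dec)` embeds via `y_i ↦ b_i` as the sub-bialgebra of
`(ℚ⟨B⟩, ∗_b, Δ_dec)` spanned by words not containing `b₀`:  the induced linear map is
injective, on `b₀`-free words `∗_b` agrees with the stuffle product and produces only
`b₀`-free words, and deconcatenation of a `b₀`-free word involves only `b₀`-free words. -/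
theorem stmt_16 :
    Function.Injective
      (Finsupp.mapDomain (Subtype.val : {w : List ℕ // (0 : ℕ) ∉ w} → List ℕ) :
        ({w : List ℕ // (0 : ℕ) ∉ w} →₀ ℚ) → (List ℕ →₀ ℚ)) ∧
    (∀ u v : List ℕ, (0 : ℕ) ∉ u → (0 : ℕ) ∉ v →
      bqs u v = st u v ∧ ∀ w ∈ (bqs u v).support, (0 : ℕ) ∉ w) ∧
    (∀ w : List ℕ, (0 : ℕ) ∉ w → ∀ i : ℕ,
      (0 : ℕ) ∉ w.take i ∧ (0 : ℕ) ∉ w.drop i) := by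
  refine ⟨Finsupp.mapDomain_injective Subtype.val_injective, fun u v hu hv => ?_,
    fun w hw i => ⟨fun h => hw (List.mem_of_mem_take h), fun h => hw (List.mem_of_mem_drop h)⟩⟩
  have h := bqs_eq_st u v hu hv
  exact ⟨h, h ▸ notMem_of_mem_support_st u v hu hv⟩
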